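/- Let f = (f₀, f₁) : ℝ → ℝ² be the unique bounded solution of the dilation equation f(t) = (1/3)(S₀ f(2t) + S₁ f(2t-1)) with f(t) = 0 for t ≤ 0 and f(t) = (1/2, 1/2)ᵀ for t ≥ 1. Then for every ε > 0, the summatory function of Stern's sequence satisfies ∑_{n ≤ x} s(n) = 3^{⌊log₂ x⌋ + 1} · f₀(2^{⟨log₂ x⟩ - 1}) + O(x^{log₂ τ + ε}) as x → ∞, where ⌊y⌋ and ⟨y⟩ denote the integer and fractional parts of y, and τ = (1+√5)/2 is the golden ratio. -/

import Mathlib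

open MeasureTheory Filter Topology Real
open scoped ENNReal

noncomputable section

/-- Stern's diatomic sequence: s(0)=0, s(1)=1, s(2n)=s(n), s(2n+1)=s(n)+s(n+1). -/
def stern : ℕ → ℕ
  | 0 => 0
  | 1 => 1
  | n + 2 =>
    if h : n % 2 = 0 then stern (n / 2 + 1)
    else stern (n / 2 + 1) + stern (n / 2 + 2)
decreasing_by all_goals omega
/-- The matrix S₀ with rows (1,0),(1,1). -/
def dilS0 : Matrix (Fin 2) (Fin 2) ℝ := !![1, 0; 1, 1]

/-- The matrix S₁ with rows (1,1),(0,1). -/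
def dilS1 : Matrix (Fin 2) (Fin 2) ℝ := !![1, 1; 0, 1]

/-- `f = (f₀, f₁) : ℝ → ℝ²` solves the dilation equation
`f(t) = (1/3)(S₀ f(2t) + S₁ f(2t-1))` with the boundary conditions
`f ≡ 0` on `(-∞, 0]` and `f ≡ (1/2, 1/2)ᵀ` on `[1, ∞)`. -/
def IsDilationSolution (f : ℝ → Fin 2 → ℝ) : Prop :=
  (∀ t : ℝ, f t = (1 / 3 : ℝ) •
      (dilS0.mulVec (f (2 * t)) + dilS1.mulVec (f (2 * t - 1)))) ∧
  (∀ t : ℝ, t ≤ 0 → f t = 0) ∧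
  (∀ t : ℝ, 1 ≤ t → f t = fun _ => 1 / 2)

/-!
Let `A(n) = sternTrapezoid n` be the integral over `[0, n]` of the piecewise linear interpolation
of `s`, so that `∑_{k ≤ n} s(k) = A(n) + s(n)/2` and `A(2n) = 3 A(n)`. For `n ≤ 2^m`, both
`(s(c 2^m + n), s(c 2^m + n + 1))` and `A(c 2^m + n) - 3^m A(c)` are linear functions of
`(s(c), s(c + 1))`; comparing the blocks `c = 0, 1, 2, 3` shows that the samples
`(A(n), A(2^m + n) - A(n) - 3^m/2)` satisfy the dilation equation discretised at level `m`.
Hence the error `3^m f(t) - sample(⌊2^m t⌋)` is multiplied by `S₀` or `S₁` from one level to the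
next. Both matrices have norm `φ` for a suitable norm on `ℝ²`, so the error is `O(φ^m)`; the same
bound applied to the pairs `(s(n), s(n + 1))` gives `s(n) ≤ φ^m` for `n ≤ 2^m`. Finally
`φ^m ≤ x^(log₂ φ)` when `2^m ≤ x`.
-/

open Matrix

@[simp] lemma stern_zero : stern 0 = 0 := by simp [stern]

@[simp] lemma stern_one : stern 1 = 1 := by simp [stern]

lemma stern_two_mul (n : ℕ) : stern (2 * n) = stern n := by
  cases n with
  | zero => rfl
  | succ k =>
    rw [show 2 * (k + 1) = 2 * k + 2 by ring, stern]
    simp [show (2 * k) / 2 = k by omega]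

lemma stern_two_mul_add_one (n : ℕ) : stern (2 * n + 1) = stern n + stern (n + 1) := by
  cases n with
  | zero => simp
  | succ k =>
    rw [show 2 * (k + 1) + 1 = (2 * k + 1) + 2 by ring, stern]
    simp [show (2 * k + 1) % 2 = 1 by omega, show (2 * k + 1) / 2 = k by omega]

lemma stern_two : stern 2 = 1 := by simpa using stern_two_mul 1

lemma stern_three : stern 3 = 2 := by simpa [stern_two] using stern_two_mul_add_one 1

lemma stern_four : stern 4 = 1 := by simpa [stern_two] using stern_two_mul 2

lemma dilS0_mulVec (v : Fin 2 → ℝ) : dilS0 *ᵥ v = ![v 0, v 0 + v 1] := by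
  ext i; fin_cases i <;> simp [dilS0, mulVec, dotProduct, Fin.sum_univ_two]

lemma dilS1_mulVec (v : Fin 2 → ℝ) : dilS1 *ᵥ v = ![v 0 + v 1, v 1] := by
  ext i; fin_cases i <;> simp [dilS1, mulVec, dotProduct, Fin.sum_univ_two]

def sternPair (n : ℕ) : Fin 2 → ℝ := ![(stern n : ℝ), stern (n + 1)]

lemma sternPair_two_mul (n : ℕ) : sternPair (2 * n) = dilS0 *ᵥ sternPair n := by
  rw [dilS0_mulVec]
  simp [sternPair, stern_two_mul, stern_two_mul_add_one]

lemma sternPair_two_mul_add_one (n : ℕ) : sternPair (2 * n + 1) = dilS1 *ᵥ sternPair n := by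
  rw [dilS1_mulVec, sternPair, show 2 * n + 1 + 1 = 2 * (n + 1) by ring]
  simp [sternPair, stern_two_mul, stern_two_mul_add_one]

lemma exists_linearMap_sternPair_mul_two_pow_add {m n : ℕ} (hn : n < 2 ^ m) :
    ∃ L : (Fin 2 → ℝ) →ₗ[ℝ] Fin 2 → ℝ, ∀ c, sternPair (c * 2 ^ m + n) = L (sternPair c) := by
  induction m generalizing n with
  | zero => exact ⟨LinearMap.id, fun c => by simp [show n = 0 by simpa using hn]⟩
  | succ m ih =>
    obtain ⟨k, rfl | rfl⟩ := Nat.even_or_odd' n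
    · obtain ⟨L, hL⟩ := ih (n := k) (by omega)
      refine ⟨(mulVecLin dilS0).comp L, fun c => ?_⟩
      rw [show c * 2 ^ (m + 1) + 2 * k = 2 * (c * 2 ^ m + k) by ring, sternPair_two_mul, hL]
      rfl
    · obtain ⟨L, hL⟩ := ih (n := k) (by omega)
      refine ⟨(mulVecLin dilS1).comp L, fun c => ?_⟩
      rw [show c * 2 ^ (m + 1) + (2 * k + 1) = 2 * (c * 2 ^ m + k) + 1 by ring,
        sternPair_two_mul_add_one, hL]
      rfl

/-- An extremal norm for `{S₀, S₁}`: both matrices have norm `φ` with respect to it, and `φ` is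
their joint spectral radius. -/
def goldenNorm (v : Fin 2 → ℝ) : ℝ := max (max |v 0| |v 1|) ((|v 0| + |v 1|) / goldenRatio)

lemma abs_apply_le_goldenNorm (v : Fin 2 → ℝ) (i : Fin 2) : |v i| ≤ goldenNorm v := by
  fin_cases i
  · exact (le_max_left _ _).trans (le_max_left _ _)
  · exact (le_max_right _ _).trans (le_max_left _ _)

lemma abs_add_abs_le_goldenRatio_mul_goldenNorm (v : Fin 2 → ℝ) :
    |v 0| + |v 1| ≤ goldenRatio * goldenNorm v := by
  rw [← div_le_iff₀' goldenRatio_pos]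
  exact le_max_right _ _

lemma goldenNorm_le_abs_add_abs (v : Fin 2 → ℝ) : goldenNorm v ≤ |v 0| + |v 1| := by
  have := one_lt_goldenRatio
  refine max_le (max_le ?_ ?_) ?_
  · linarith [abs_nonneg (v 1)]
  · linarith [abs_nonneg (v 0)]
  · rw [div_le_iff₀ goldenRatio_pos]
    nlinarith [abs_nonneg (v 0), abs_nonneg (v 1)]

lemma goldenNorm_vecCons_add_le {a b N : ℝ} (ha : |a| ≤ N) (hab : |a| + |b| ≤ goldenRatio * N) :
    goldenNorm ![a, a + b] ≤ goldenRatio * N := by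
  have hφ := one_lt_goldenRatio
  have hN : 0 ≤ N := (abs_nonneg a).trans ha
  have hsum := abs_add_le a b
  have hφN : goldenRatio * N * goldenRatio = goldenRatio * N + N := by
    rw [mul_right_comm, ← sq, goldenRatio_sq]; ring
  simp only [goldenNorm, Matrix.cons_val_zero, Matrix.cons_val_one]
  refine max_le (max_le (by nlinarith) (by linarith)) ?_
  rw [div_le_iff₀ goldenRatio_pos]
  linarith

lemma goldenNorm_dilS0_mulVec_le (v : Fin 2 → ℝ) :
    goldenNorm (dilS0 *ᵥ v) ≤ goldenRatio * goldenNorm v := by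
  rw [dilS0_mulVec]
  exact goldenNorm_vecCons_add_le (abs_apply_le_goldenNorm v 0)
    (abs_add_abs_le_goldenRatio_mul_goldenNorm v)

lemma goldenNorm_dilS1_mulVec_le (v : Fin 2 → ℝ) :
    goldenNorm (dilS1 *ᵥ v) ≤ goldenRatio * goldenNorm v := by
  have h := goldenNorm_vecCons_add_le (b := v 0) (abs_apply_le_goldenNorm v 1)
    (by linarith [abs_add_abs_le_goldenRatio_mul_goldenNorm v])
  rw [dilS1_mulVec]
  simpa [goldenNorm, add_comm, max_comm] using h

lemma goldenNorm_sternPair_le {m n : ℕ} (hn : n < 2 ^ m) :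
    goldenNorm (sternPair n) ≤ goldenRatio ^ m := by
  induction m generalizing n with
  | zero =>
    obtain rfl : n = 0 := by simpa using hn
    simpa [sternPair] using goldenNorm_le_abs_add_abs (sternPair 0)
  | succ m ih =>
    obtain ⟨k, rfl | rfl⟩ := Nat.even_or_odd' n
    · rw [sternPair_two_mul, pow_succ']
      exact (goldenNorm_dilS0_mulVec_le _).trans (by gcongr; exact ih (by omega))
    · rw [sternPair_two_mul_add_one, pow_succ']
      exact (goldenNorm_dilS1_mulVec_le _).trans (by gcongr; exact ih (by omega))

lemma stern_le_goldenRatio_pow {m n : ℕ} (hn : n ≤ 2 ^ m) : (stern n : ℝ) ≤ goldenRatio ^ m := by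
  rcases n with _ | n
  · simp [pow_nonneg goldenRatio_pos.le]
  · calc (stern (n + 1) : ℝ) = |sternPair n 1| := by simp [sternPair]
      _ ≤ goldenRatio ^ m := (abs_apply_le_goldenNorm _ 1).trans
          (goldenNorm_sternPair_le (by omega))

def sternTrapezoid (n : ℕ) : ℝ := ∑ i ∈ Finset.range n, ((stern i : ℝ) + stern (i + 1)) / 2

lemma sternTrapezoid_succ (n : ℕ) :
    sternTrapezoid (n + 1) = sternTrapezoid n + ((stern n : ℝ) + stern (n + 1)) / 2 :=
  Finset.sum_range_succ _ _

lemma sum_range_succ_stern (n : ℕ) :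
    ∑ i ∈ Finset.range (n + 1), (stern i : ℝ) = sternTrapezoid n + stern n / 2 := by
  induction n with
  | zero => simp [sternTrapezoid]
  | succ n ih =>
    rw [Finset.sum_range_succ, ih, sternTrapezoid_succ]
    ring

lemma sternTrapezoid_two_mul (n : ℕ) : sternTrapezoid (2 * n) = 3 * sternTrapezoid n := by
  induction n with
  | zero => simp [sternTrapezoid]
  | succ n ih =>
    rw [show 2 * (n + 1) = 2 * n + 1 + 1 by ring, sternTrapezoid_succ, sternTrapezoid_succ, ih,
      show 2 * n + 1 + 1 = 2 * (n + 1) by ring, stern_two_mul_add_one, stern_two_mul,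
      stern_two_mul, sternTrapezoid_succ]
    push_cast
    ring

lemma sternTrapezoid_mul_two_pow (c m : ℕ) :
    sternTrapezoid (c * 2 ^ m) = 3 ^ m * sternTrapezoid c := by
  induction m with
  | zero => simp
  | succ m ih =>
    rw [pow_succ', ← mul_assoc, mul_comm c, mul_assoc, sternTrapezoid_two_mul, ih]
    ring

@[simp] lemma sternTrapezoid_zero : sternTrapezoid 0 = 0 := by simp [sternTrapezoid]

@[simp] lemma sternTrapezoid_one : sternTrapezoid 1 = 1 / 2 := by simp [sternTrapezoid]

lemma sternTrapezoid_two_pow (m : ℕ) : sternTrapezoid (2 ^ m) = 3 ^ m / 2 := by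
  simpa [div_eq_mul_inv] using sternTrapezoid_mul_two_pow 1 m

lemma exists_linearMap_sternTrapezoid_mul_two_pow_add {m n : ℕ} (hn : n ≤ 2 ^ m) :
    ∃ φ : (Fin 2 → ℝ) →ₗ[ℝ] ℝ, ∀ c,
      sternTrapezoid (c * 2 ^ m + n) = 3 ^ m * sternTrapezoid c + φ (sternPair c) := by
  induction n with
  | zero => exact ⟨0, fun c => by simp [sternTrapezoid_mul_two_pow]⟩
  | succ n ih =>
    obtain ⟨φ, hφ⟩ := ih (by omega)
    obtain ⟨L, hL⟩ := exists_linearMap_sternPair_mul_two_pow_add (m := m) (n := n) (by omega)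
    let mean : (Fin 2 → ℝ) →ₗ[ℝ] ℝ :=
      (1 / 2 : ℝ) • (LinearMap.proj (R := ℝ) (φ := fun _ : Fin 2 => ℝ) 0 + LinearMap.proj 1)
    refine ⟨φ + mean.comp L, fun c => ?_⟩
    have hx0 : (stern (c * 2 ^ m + n) : ℝ) = L (sternPair c) 0 := by rw [← hL c]; rfl
    have hx1 : (stern (c * 2 ^ m + n + 1) : ℝ) = L (sternPair c) 1 := by rw [← hL c]; rfl
    rw [← add_assoc, sternTrapezoid_succ, hφ c, hx0, hx1]
    simp only [mean, LinearMap.add_apply, LinearMap.comp_apply, LinearMap.smul_apply,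
      LinearMap.proj_apply, smul_eq_mul]
    ring

lemma sternPair_two : sternPair 2 = sternPair 1 + sternPair 0 := by
  ext i; fin_cases i <;> norm_num [sternPair, stern_two, stern_three]

lemma sternPair_three : sternPair 3 + sternPair 0 = (2 : ℝ) • sternPair 1 := by
  ext i; fin_cases i <;> norm_num [sternPair, stern_two, stern_three, stern_four]

lemma sternTrapezoid_two : sternTrapezoid 2 = 3 / 2 := by
  norm_num [sternTrapezoid, Finset.sum_range_succ, stern_two]

lemma sternTrapezoid_three : sternTrapezoid 3 = 3 := by
  norm_num [sternTrapezoid, Finset.sum_range_succ, stern_two, stern_three]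

lemma sternTrapezoid_two_pow_succ_add {m n : ℕ} (hn : n ≤ 2 ^ m) :
    sternTrapezoid (2 ^ (m + 1) + n) = sternTrapezoid (2 ^ m + n) + sternTrapezoid n + 3 ^ m := by
  obtain ⟨φ, hφ⟩ := exists_linearMap_sternTrapezoid_mul_two_pow_add hn
  have h0 := hφ 0
  have h1 := hφ 1
  have h2 := hφ 2
  rw [← pow_succ', sternPair_two, map_add, sternTrapezoid_two] at h2
  simp only [zero_mul, zero_add, one_mul, sternTrapezoid_zero, sternTrapezoid_one, mul_zero]
    at h0 h1
  linarith

lemma sternTrapezoid_three_mul_two_pow_add {m n : ℕ} (hn : n ≤ 2 ^ m) :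
    sternTrapezoid (3 * 2 ^ m + n) + sternTrapezoid n =
      2 * sternTrapezoid (2 ^ m + n) + 2 * 3 ^ m := by
  obtain ⟨φ, hφ⟩ := exists_linearMap_sternTrapezoid_mul_two_pow_add hn
  have h0 := hφ 0
  have h1 := hφ 1
  have h3 := hφ 3
  have hpair := congrArg φ sternPair_three
  rw [map_add, map_smul, smul_eq_mul] at hpair
  rw [sternTrapezoid_three] at h3
  simp only [zero_mul, zero_add, one_mul, sternTrapezoid_zero, sternTrapezoid_one, mul_zero]
    at h0 h1
  linarith

/-- The discrete counterpart of `3 ^ m • f (n / 2 ^ m)`. -/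
def sternSample (m n : ℕ) : Fin 2 → ℝ :=
  ![sternTrapezoid n, sternTrapezoid (2 ^ m + n) - sternTrapezoid n - 3 ^ m / 2]

lemma sternSample_zero (m : ℕ) : sternSample m 0 = 0 := by
  ext i; fin_cases i <;> simp [sternSample, sternTrapezoid_two_pow]

lemma sternSample_two_pow (m : ℕ) : sternSample m (2 ^ m) = fun _ => 3 ^ m / 2 := by
  have h : sternTrapezoid (2 ^ m + 2 ^ m) = 3 ^ (m + 1) / 2 := by
    rw [← two_mul, ← pow_succ', sternTrapezoid_two_pow]
  ext i; fin_cases i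
  · simp only [sternSample, sternTrapezoid_two_pow, Fin.zero_eta, cons_val_zero]
  · simp only [sternSample, sternTrapezoid_two_pow, h, Fin.mk_one, cons_val_one, cons_val_fin_one]
    ring

lemma sternSample_succ_of_le {m n : ℕ} (hn : n ≤ 2 ^ m) :
    sternSample (m + 1) n = dilS0 *ᵥ sternSample m n := by
  rw [dilS0_mulVec]
  ext i; fin_cases i
  · simp [sternSample]
  · simp only [sternSample, sternTrapezoid_two_pow_succ_add hn, Fin.mk_one, cons_val_one,
      cons_val_fin_one, cons_val_zero]
    ring

lemma sternSample_succ_two_pow_add {m n : ℕ} (hn : n ≤ 2 ^ m) :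
    sternSample (m + 1) (2 ^ m + n) =
      dilS0 *ᵥ (fun _ => 3 ^ m / 2) + dilS1 *ᵥ sternSample m n := by
  have h := sternTrapezoid_three_mul_two_pow_add hn
  rw [dilS0_mulVec, dilS1_mulVec, sternSample,
    show 2 ^ (m + 1) + (2 ^ m + n) = 3 * 2 ^ m + n by ring]
  ext i; fin_cases i
  · simp only [Fin.zero_eta, cons_val_zero, sternSample, cons_val_one, cons_val_fin_one,
      Pi.add_apply]
    ring
  · simp only [pow_succ, Fin.mk_one, cons_val_one, cons_val_fin_one, sternSample, cons_val_zero,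
      Pi.add_apply]
    linarith

namespace IsDilationSolution

variable {f : ℝ → Fin 2 → ℝ}

lemma three_pow_succ_smul (hf : IsDilationSolution f) (m : ℕ) (t : ℝ) :
    (3 : ℝ) ^ (m + 1) • f t =
      dilS0 *ᵥ ((3 : ℝ) ^ m • f (2 * t)) + dilS1 *ᵥ ((3 : ℝ) ^ m • f (2 * t - 1)) := by
  rw [hf.1 t, mulVec_smul, mulVec_smul, ← smul_add, smul_smul, pow_succ, mul_assoc]
  norm_num

lemma goldenNorm_sub_sternSample_le (hf : IsDilationSolution f) {C : ℝ}
    (hC : ∀ t i, |f t i| ≤ C) (m : ℕ) (t : ℝ) :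
    goldenNorm ((3 : ℝ) ^ m • f t - sternSample m (min ⌊2 ^ m * t⌋₊ (2 ^ m))) ≤
      goldenRatio ^ m * (2 * C) := by
  induction m generalizing t with
  | zero =>
    simp only [pow_zero, one_smul, one_mul]
    by_cases ht : 1 ≤ t
    · have hC0 : 0 ≤ C := (abs_nonneg _).trans (hC 0 0)
      have hidx : min ⌊t⌋₊ 1 = 2 ^ 0 := min_eq_right (Nat.le_floor (by simpa using ht))
      rw [hidx, sternSample_two_pow, hf.2.2 t ht]
      norm_num [goldenNorm, hC0]
    · rw [Nat.floor_eq_zero.mpr (not_le.mp ht), Nat.zero_min, sternSample_zero, sub_zero]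
      linarith [goldenNorm_le_abs_add_abs (f t), hC t 0, hC t 1]
  | succ m ih =>
    have hpow : goldenRatio ^ (m + 1) * (2 * C) = goldenRatio * (goldenRatio ^ m * (2 * C)) := by
      ring
    rw [hf.three_pow_succ_smul, hpow]
    by_cases ht : 2 * t < 1
    · have hfloor : ⌊2 ^ m * (2 * t)⌋₊ < 2 ^ m := by
        rw [Nat.floor_lt' (by positivity)]
        push_cast
        nlinarith [pow_pos (two_pos : (0 : ℝ) < 2) m]
      have hidx : min ⌊2 ^ (m + 1) * t⌋₊ (2 ^ (m + 1)) = min ⌊2 ^ m * (2 * t)⌋₊ (2 ^ m) := by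
        rw [pow_succ, mul_assoc]; omega
      rw [hidx, sternSample_succ_of_le (min_le_right _ _), hf.2.1 (2 * t - 1) (by linarith),
        smul_zero, mulVec_zero, add_zero, ← mulVec_sub]
      exact (goldenNorm_dilS0_mulVec_le _).trans (by gcongr; exact ih _)
    · have hfloor : ⌊2 ^ (m + 1) * t⌋₊ = ⌊2 ^ m * (2 * t - 1)⌋₊ + 2 ^ m := by
        rw [← Nat.floor_add_natCast (by nlinarith [pow_pos (two_pos : (0 : ℝ) < 2) m])]
        push_cast; ring_nf
      have hidx : min ⌊2 ^ (m + 1) * t⌋₊ (2 ^ (m + 1)) =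
          2 ^ m + min ⌊2 ^ m * (2 * t - 1)⌋₊ (2 ^ m) := by
        rw [hfloor, pow_succ]; omega
      have hconst : (3 : ℝ) ^ m • f (2 * t) = fun _ => 3 ^ m / 2 := by
        rw [hf.2.2 (2 * t) (by linarith)]; ext; simp [div_eq_mul_inv]
      rw [hidx, sternSample_succ_two_pow_add (min_le_right _ _), hconst, add_sub_add_left_eq_sub,
        ← mulVec_sub]
      exact (goldenNorm_dilS1_mulVec_le _).trans (by gcongr; exact ih _)

lemma abs_sum_stern_sub_le (hf : IsDilationSolution f) {C : ℝ} (hC : ∀ t i, |f t i| ≤ C)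
    {m : ℕ} {t : ℝ} (hN : ⌊2 ^ m * t⌋₊ ≤ 2 ^ m) :
    |∑ n ∈ Finset.range (⌊2 ^ m * t⌋₊ + 1), (stern n : ℝ) - 3 ^ m * f t 0| ≤
      goldenRatio ^ m * (2 * C + 1 / 2) := by
  have herr := (abs_apply_le_goldenNorm _ 0).trans (hf.goldenNorm_sub_sternSample_le hC m t)
  rw [min_eq_left hN] at herr
  simp only [Pi.sub_apply, Pi.smul_apply, smul_eq_mul, sternSample, Matrix.cons_val_zero] at herr
  set N := ⌊2 ^ m * t⌋₊
  have hstern := stern_le_goldenRatio_pow hN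
  rw [sum_range_succ_stern]
  calc |sternTrapezoid N + stern N / 2 - 3 ^ m * f t 0|
      = |(sternTrapezoid N - 3 ^ m * f t 0) + stern N / 2| := by rw [add_sub_right_comm]
    _ ≤ |sternTrapezoid N - 3 ^ m * f t 0| + |(stern N : ℝ) / 2| := abs_add_le _ _
    _ = |3 ^ m * f t 0 - sternTrapezoid N| + stern N / 2 := by
      rw [abs_sub_comm, abs_of_nonneg (a := (stern N : ℝ) / 2) (by positivity)]
    _ ≤ goldenRatio ^ m * (2 * C + 1 / 2) := by linarith

end IsDilationSolution

section DyadicScale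

variable {b x : ℝ}

lemma pow_floor_logb_le (hb : 1 < b) (hx : 1 ≤ x) : b ^ ⌊logb b x⌋₊ ≤ x := by
  calc b ^ ⌊logb b x⌋₊ = b ^ (⌊logb b x⌋₊ : ℝ) := (rpow_natCast b _).symm
    _ ≤ b ^ logb b x := rpow_le_rpow_of_exponent_le hb.le (Nat.floor_le (logb_nonneg hb hx))
    _ = x := rpow_logb (by linarith) hb.ne' (by linarith)

lemma lt_pow_floor_logb_add_one (hb : 1 < b) (hx : 1 ≤ x) : x < b ^ (⌊logb b x⌋₊ + 1) := by
  calc x = b ^ logb b x := (rpow_logb (by linarith) hb.ne' (by linarith)).symm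
    _ < b ^ ((⌊logb b x⌋₊ + 1 : ℕ) : ℝ) := by
      apply rpow_lt_rpow_of_exponent_lt hb
      push_cast
      exact Nat.lt_floor_add_one _
    _ = b ^ (⌊logb b x⌋₊ + 1) := rpow_natCast b _

lemma pow_floor_logb_add_one_mul_rpow_fract (hb : 1 < b) (hx : 1 ≤ x) :
    b ^ (⌊logb b x⌋₊ + 1) * b ^ (Int.fract (logb b x) - 1) = x := by
  have hL : (⌊logb b x⌋₊ : ℝ) = ⌊logb b x⌋ := natCast_floor_eq_intCast_floor (logb_nonneg hb hx)
  rw [← rpow_natCast, ← rpow_add (by linarith), Nat.cast_add_one, hL, Int.fract,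
    show (⌊logb b x⌋ : ℝ) + 1 + (logb b x - ⌊logb b x⌋ - 1) = logb b x by ring,
    rpow_logb (by linarith) hb.ne' (by linarith)]

lemma pow_le_rpow_logb_of_pow_le {a : ℝ} {m : ℕ} (hb : 1 < b) (ha : 1 ≤ a) (h : b ^ m ≤ x) :
    a ^ m ≤ x ^ logb b a := by
  have hb0 : 0 ≤ b := by linarith
  calc a ^ m = (b ^ logb b a) ^ m := by rw [rpow_logb (by linarith) hb.ne' (by linarith)]
    _ = (b ^ m) ^ logb b a := by rw [← rpow_mul_natCast hb0, mul_comm, rpow_natCast_mul hb0]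
    _ ≤ x ^ logb b a := rpow_le_rpow (by positivity) h (logb_nonneg hb ha)

end DyadicScale

/-- For the unique bounded solution f of the dilation equation, and every ε > 0, the
summatory function of Stern's sequence satisfies
∑_{n ≤ x} s(n) = 3^{⌊log₂ x⌋+1} · f₀(2^{⟨log₂ x⟩ - 1}) + O(x^{log₂ τ + ε}) as x → ∞. -/
theorem stern_summatory_asymptotics (f : ℝ → Fin 2 → ℝ)
    (hbdd : ∃ C : ℝ, ∀ (t : ℝ) (i : Fin 2), |f t i| ≤ C)
    (hf : IsDilationSolution f) :
    ∀ ε : ℝ, 0 < ε → ∃ C : ℝ, ∀ x : ℝ, 1 ≤ x →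
      |(∑ n ∈ Finset.range (⌊x⌋₊ + 1), (stern n : ℝ)) -
          (3 : ℝ) ^ (⌊Real.logb 2 x⌋ + 1) *
            f ((2 : ℝ) ^ (Int.fract (Real.logb 2 x) - 1)) 0|
        ≤ C * x ^ (Real.logb 2 goldenRatio + ε) := by
  intro ε hε
  obtain ⟨C, hC⟩ := hbdd
  have hC0 : 0 ≤ C := (abs_nonneg _).trans (hC 0 0)
  refine ⟨goldenRatio * (2 * C + 1 / 2), fun x hx => ?_⟩
  set m := ⌊logb 2 x⌋₊
  have hx_eq := pow_floor_logb_add_one_mul_rpow_fract one_lt_two hx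
  have hN : ⌊x⌋₊ ≤ 2 ^ (m + 1) :=
    Nat.floor_le_of_le (by exact_mod_cast (lt_pow_floor_logb_add_one one_lt_two hx).le)
  have hsum := hf.abs_sum_stern_sub_le hC (m := m + 1) (by rwa [hx_eq])
  have hscale := pow_le_rpow_logb_of_pow_le one_lt_two one_lt_goldenRatio.le
    (pow_floor_logb_le one_lt_two hx)
  have hfloor : (⌊logb 2 x⌋ + 1 : ℤ) = (m + 1 : ℕ) := by
    rw [Nat.cast_add_one, Int.natCast_floor_eq_floor (logb_nonneg one_lt_two hx)]
  rw [hx_eq] at hsum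
  rw [hfloor, zpow_natCast]
  calc _ ≤ goldenRatio ^ (m + 1) * (2 * C + 1 / 2) := hsum
    _ = goldenRatio ^ m * (goldenRatio * (2 * C + 1 / 2)) := by ring
    _ ≤ x ^ logb 2 goldenRatio * (goldenRatio * (2 * C + 1 / 2)) := by gcongr
    _ ≤ goldenRatio * (2 * C + 1 / 2) * x ^ (logb 2 goldenRatio + ε) := by
      rw [mul_comm]
      gcongr
      linarith
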